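/- arXiv:2108.11029 — 6 statements merged into one kernel-verified Lean document; each statement's English description precedes it below -/
import Mathlib

section
/- Let n and r be positive integers and let X ∈ V^r ⊂ M_n(ℂ), i.e., X_{ij} = 0 whenever i − j > r and X_{ij} ≠ 0 whenever i − j = r. Then for every a ∈ ℂ, dim ker(X − aI) ≤ r; equivalently, the Jordan canonical form of X has at most r Jordan blocks for each eigenvalue. -/
/-- If `X ∈ V^r` (entries on the `r`-th subdiagonal nonzero, entries strictly below
it zero), then `dim ker(X - aI) ≤ r` for every `a ∈ ℂ`; i.e. the Jordan form of `X`
has at most `r` blocks for each eigenvalue. -/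
theorem stmt2 (n r : ℕ) (hn : 0 < n) (hr : 0 < r)
    (X : Matrix (Fin n) (Fin n) ℂ)
    (hlow : ∀ i j : Fin n, ((i : ℕ) : ℤ) - ((j : ℕ) : ℤ) > (r : ℤ) → X i j = 0)
    (hdiag : ∀ i j : Fin n, ((i : ℕ) : ℤ) - ((j : ℕ) : ℤ) = (r : ℤ) → X i j ≠ 0) :
    ∀ a : ℂ,
      Module.finrank ℂ (LinearMap.ker (Matrix.mulVecLin (X - a • 1))) ≤ r := by
  intro a
  set Y := X - a • (1 : Matrix (Fin n) (Fin n) ℂ) with hY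
  have hYlow : ∀ i j : Fin n, ((i : ℕ) : ℤ) - ((j : ℕ) : ℤ) > (r : ℤ) → Y i j = 0 := by
    intro i j h
    have hne : i ≠ j := by intro h'; subst h'; omega
    simp [hY, Matrix.sub_apply, Matrix.smul_apply, Matrix.one_apply_ne hne, hlow i j h]
  have hYdiag : ∀ i j : Fin n, ((i : ℕ) : ℤ) - ((j : ℕ) : ℤ) = (r : ℤ) → Y i j ≠ 0 := by
    intro i j h
    have hne : i ≠ j := by intro h'; subst h'; omega
    simpa [hY, Matrix.sub_apply, Matrix.smul_apply, Matrix.one_apply_ne hne]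
      using hdiag i j h
  let L : (Fin n → ℂ) →ₗ[ℂ] (Fin r → ℂ) :=
    { toFun := fun v k => if h : n - r + (k : ℕ) < n then v ⟨n - r + k, h⟩ else 0
      map_add' := by intro v w; funext k; by_cases h : n - r + (k : ℕ) < n <;> simp [h]
      map_smul' := by intro c v; funext k; by_cases h : n - r + (k : ℕ) < n <;> simp [h] }
  have hinj : Function.Injective
      (L.comp (LinearMap.ker (Matrix.mulVecLin Y)).subtype) := by
    rw [← LinearMap.ker_eq_bot, LinearMap.ker_eq_bot']
    rintro ⟨v, hv⟩ h0
    have hv0 : Y.mulVec v = 0 := hv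
    have hhi : ∀ j : Fin n, n - r ≤ (j : ℕ) → v j = 0 := by
      intro j hj
      have hk : (j : ℕ) - (n - r) < r := by omega
      have h1 : n - r + ((j : ℕ) - (n - r)) < n := by omega
      have h2 := congrFun h0 (⟨(j : ℕ) - (n - r), hk⟩ : Fin r)
      simp only [LinearMap.comp_apply, Submodule.subtype_apply, Pi.zero_apply, L,
        LinearMap.coe_mk, AddHom.coe_mk] at h2
      rw [dif_pos h1] at h2
      have hje : (⟨n - r + ((j : ℕ) - (n - r)), h1⟩ : Fin n) = j := by
        apply Fin.ext; simp; omega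
      rwa [hje] at h2
    have key : ∀ k : ℕ, ∀ j : Fin n, n - (j : ℕ) ≤ k → v j = 0 := by
      intro k
      induction k with
      | zero => intro j hj; exfalso; have := j.isLt; omega
      | succ k ih =>
        intro j hj
        by_cases hge : n - r ≤ (j : ℕ)
        · exact hhi j hge
        · have hi : (j : ℕ) + r < n := by omega
          set i : Fin n := ⟨(j : ℕ) + r, hi⟩ with hidef
          have hrow : ∑ j', Y i j' * v j' = 0 := by
            have := congrFun hv0 i
            simpa [Matrix.mulVec, dotProduct] using this
          have hzero : ∀ j' : Fin n, j' ∈ Finset.univ → j' ≠ j → Y i j' * v j' = 0 := by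
            intro j' _ hj'
            rcases lt_or_gt_of_ne (fun h => hj' (Fin.ext h)) with hlt | hgt
            · have : Y i j' = 0 := by
                apply hYlow
                simp [hidef]
                push_cast
                omega
              simp [this]
            · have : v j' = 0 := by
                apply ih
                omega
              simp [this]
          rw [Finset.sum_eq_single j hzero (by simp)] at hrow
          have hYij : Y i j ≠ 0 := by
            apply hYdiag
            simp [hidef]
          exact (mul_eq_zero.mp hrow).resolve_left hYij
    have hveq : v = 0 := by
      funext j
      exact key n j (by omega)
    exact Subtype.ext hveq
  calc Module.finrank ℂ (LinearMap.ker (Matrix.mulVecLin Y))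
      ≤ Module.finrank ℂ (Fin r → ℂ) := LinearMap.finrank_le_finrank_of_injective hinj
    _ = r := by simp
end

section
/- Fix a positive integer r with r < n. Let q = ∏_{i=1}^s (x − a_i)^{m_i} be a monic polynomial of degree n with a_1, …, a_s ∈ ℂ distinct and m_i ≥ 1, and let D_q = diag(a_1, …, a_1, a_2, …, a_2, …, a_s, …, a_s) ∈ M_n(ℂ), where a_i appears m_i consecutive times. Let U_r ∈ M_n(ℂ) be any matrix with all entries on the r-th subdiagonal (positions (i,j) with i − j = r) nonzero and all other entries 0. Then for every i ∈ {1, …, s} and every integer j ≥ 0, dim ker((U_r + D_q − a_i I)^j) = min(r j, m_i). In other words, the Jordan type of U_r + D_q at the eigenvalue a_i is the partition λ^{r,m_i}, so U_r + D_q lies in the adjoint orbit O^r_q. -/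
open Matrix Finset

section aux

variable {n r : ℕ} (A : Matrix (Fin n) (Fin n) ℂ)

lemma aux_pow_tri (hlow : ∀ p q : Fin n, (p:ℕ) < (q:ℕ) → A p q = 0) :
    ∀ (j : ℕ) (p q : Fin n), (p:ℕ) < (q:ℕ) → (A ^ j) p q = 0 := by
  intro j
  induction j with
  | zero =>
    intro p q h
    simp [Matrix.one_apply, Fin.ne_of_lt (Fin.lt_def.2 h)]
  | succ j ih =>
    intro p q h
    rw [pow_succ', Matrix.mul_apply]
    apply Finset.sum_eq_zero
    intro t _
    by_cases ht : (p:ℕ) < (t:ℕ)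
    · rw [hlow p t ht, zero_mul]
    · rw [ih t q (lt_of_le_of_lt (not_lt.1 ht) h), mul_zero]

lemma aux_pow_diag (hlow : ∀ p q : Fin n, (p:ℕ) < (q:ℕ) → A p q = 0) :
    ∀ (j : ℕ) (p : Fin n), (A ^ j) p p = (A p p) ^ j := by
  intro j
  induction j with
  | zero => intro p; simp [Matrix.one_apply]
  | succ j ih =>
    intro p
    rw [pow_succ', Matrix.mul_apply]
    rw [Finset.sum_eq_single p]
    · rw [ih p, pow_succ']
    · intro t _ ht
      rcases lt_or_gt_of_ne (fun h => ht (Fin.ext h) : (t:ℕ) ≠ (p:ℕ)) with h | h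
      · rw [aux_pow_tri A hlow j t p h, mul_zero]
      · rw [hlow p t h, zero_mul]
    · intro h; exact absurd (Finset.mem_univ p) h

lemma aux_pow_band (hz : ∀ p q : Fin n, p ≠ q → (p:ℕ) ≠ (q:ℕ) + r → A p q = 0) :
    ∀ (j : ℕ) (p q : Fin n), (q:ℕ) + j * r < (p:ℕ) → (A ^ j) p q = 0 := by
  intro j
  induction j with
  | zero =>
    intro p q h
    exact Matrix.one_apply_ne (fun hpq => by simp [hpq] at h)
  | succ j ih =>
    intro p q h
    have hsm : (j + 1) * r = j * r + r := by ring
    rw [hsm] at h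
    rw [pow_succ', Matrix.mul_apply]
    apply Finset.sum_eq_zero
    intro t _
    by_cases htp : t = p
    · subst htp
      rw [ih t q (by omega), mul_zero]
    · by_cases hpt : (p:ℕ) = (t:ℕ) + r
      · rw [ih t q (by omega), mul_zero]
      · rw [hz p t (fun h' => htp h'.symm) hpt, zero_mul]

lemma aux_pow_shift (hr : 0 < r)
    (hz : ∀ p q : Fin n, p ≠ q → (p:ℕ) ≠ (q:ℕ) + r → A p q = 0)
    (hsub : ∀ p q : Fin n, (p:ℕ) = (q:ℕ) + r → A p q ≠ 0) :
    ∀ (j : ℕ) (p q : Fin n), (p:ℕ) = (q:ℕ) + j * r → (A ^ j) p q ≠ 0 := by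
  intro j
  induction j with
  | zero =>
    intro p q h
    have : p = q := Fin.ext (by omega)
    subst this
    simp [Matrix.one_apply]
  | succ j ih =>
    intro p q h
    have hsm : (j + 1) * r = j * r + r := by ring
    rw [hsm] at h
    have hpn : (p:ℕ) < n := p.isLt
    have ht0 : (p:ℕ) - r < n := by omega
    have hv : ((⟨(p:ℕ) - r, ht0⟩ : Fin n) : ℕ) = (p:ℕ) - r := rfl
    rw [pow_succ', Matrix.mul_apply, Finset.sum_eq_single (⟨(p:ℕ) - r, ht0⟩ : Fin n)]
    · apply mul_ne_zero
      · exact hsub p _ (by rw [hv]; omega)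
      · exact ih _ q (by rw [hv]; omega)
    · intro t _ htt0
      by_cases htp : t = p
      · subst htp
        rw [aux_pow_band A hz j t q (by omega), mul_zero]
      · by_cases hpt : (p:ℕ) = (t:ℕ) + r
        · exact absurd (Fin.ext (by rw [hv]; omega) : t = ⟨(p:ℕ) - r, ht0⟩) htt0
        · rw [hz p t (fun h' => htp h'.symm) hpt, zero_mul]
    · intro h; exact absurd (Finset.mem_univ _) h

lemma aux_pow_block {L mm : ℕ}
    (hlow : ∀ p q : Fin n, (p:ℕ) < (q:ℕ) → A p q = 0)
    (hz : ∀ p q : Fin n, p ≠ q → (p:ℕ) ≠ (q:ℕ) + r → A p q = 0)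
    (hB : ∀ p : Fin n, L ≤ (p:ℕ) → (p:ℕ) < L + mm → A p p = 0) :
    ∀ (j : ℕ) (p q : Fin n), L ≤ (q:ℕ) → L ≤ (p:ℕ) → (p:ℕ) < L + mm →
      (p:ℕ) < (q:ℕ) + j * r → (A ^ j) p q = 0 := by
  intro j
  induction j with
  | zero =>
    intro p q _ _ _ h
    exact Matrix.one_apply_ne (fun hpq => by subst hpq; omega)
  | succ j ih =>
    intro p q hq hp1 hp2 h
    have hsm : (j + 1) * r = j * r + r := by ring
    rw [hsm] at h
    rw [pow_succ', Matrix.mul_apply]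
    apply Finset.sum_eq_zero
    intro t _
    by_cases htp : t = p
    · subst htp; rw [hB t hp1 hp2, zero_mul]
    · by_cases hpt : (p:ℕ) = (t:ℕ) + r
      · by_cases hLt : L ≤ (t:ℕ)
        · rw [ih t q hq hLt (by omega) (by omega), mul_zero]
        · rw [aux_pow_tri A hlow j t q (by omega), mul_zero]
      · rw [hz p t (fun h' => htp h'.symm) hpt, zero_mul]

end aux

open Finset

lemma aux_P1 (s : ℕ) (m : Fin s → ℕ) (i0 : Fin s) :
    ∑ k ∈ Finset.univ.filter (fun k => k ≤ i0), m k
      = (∑ k ∈ Finset.univ.filter (fun k => k < i0), m k) + m i0 := by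
  have hset : Finset.univ.filter (fun k => k ≤ i0)
      = insert i0 (Finset.univ.filter (fun k => k < i0)) := by
    ext k
    simp only [Finset.mem_filter, Finset.mem_univ, true_and, Finset.mem_insert]
    rw [Fin.le_def, Fin.lt_def]
    constructor
    · intro h
      rcases Nat.eq_or_lt_of_le h with h' | h'
      · exact Or.inl (Fin.ext h')
      · exact Or.inr h'
    · rintro (h | h)
      · exact le_of_eq (congrArg Fin.val h)
      · exact le_of_lt h
  have hnotmem : i0 ∉ Finset.univ.filter (fun k : Fin s => k < i0) := by
    intro hmem
    exact absurd (Finset.mem_filter.1 hmem).2 (lt_irrefl i0)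
  rw [hset, Finset.sum_insert hnotmem]
  exact Nat.add_comm _ _

lemma aux_cover (s n : ℕ) (hn : 0 < n) (m : Fin s → ℕ) (hsum : ∑ i, m i = n)
    (t : Fin n) :
    ∃ i0 : Fin s, (∑ k ∈ Finset.univ.filter (fun k => k < i0), m k) ≤ (t:ℕ) ∧
      (t:ℕ) < (∑ k ∈ Finset.univ.filter (fun k => k < i0), m k) + m i0 := by
  classical
  have hs : 0 < s := by
    rcases Nat.eq_zero_or_pos s with h | h
    · subst h; simp at hsum; omega
    · exact h
  set T := Finset.univ.filter
    (fun i0 : Fin s => (∑ k ∈ Finset.univ.filter (fun k => k < i0), m k) ≤ (t:ℕ)) with hT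
  have h0T : (⟨0, hs⟩ : Fin s) ∈ T := by
    rw [hT, Finset.mem_filter]
    refine ⟨Finset.mem_univ _, ?_⟩
    have he : Finset.univ.filter (fun k : Fin s => k < (⟨0, hs⟩ : Fin s)) = ∅ := by
      ext k; simp [Fin.lt_def]
    rw [he]
    simp
  have hne : T.Nonempty := ⟨_, h0T⟩
  set i0 := T.max' hne with hi0
  have hi0T : i0 ∈ T := T.max'_mem hne
  have h1 : (∑ k ∈ Finset.univ.filter (fun k => k < i0), m k) ≤ (t:ℕ) := by
    rw [hT, Finset.mem_filter] at hi0T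
    exact hi0T.2
  refine ⟨i0, h1, ?_⟩
  by_contra hcon
  push_neg at hcon
  by_cases hlast : (i0:ℕ) + 1 < s
  · have hset : Finset.univ.filter (fun k : Fin s => k < (⟨(i0:ℕ)+1, hlast⟩ : Fin s))
        = Finset.univ.filter (fun k => k ≤ i0) := by
      ext k
      simp only [Finset.mem_filter, Finset.mem_univ, true_and]
      rw [Fin.lt_def, Fin.le_def]
      simp only [Fin.val_mk]
      omega
    have hmem : (⟨(i0:ℕ)+1, hlast⟩ : Fin s) ∈ T := by
      rw [hT, Finset.mem_filter]
      refine ⟨Finset.mem_univ _, ?_⟩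
      rw [hset, aux_P1 s m i0]
      exact hcon
    have hle := Finset.le_max' T _ hmem
    rw [← hi0, Fin.le_def] at hle
    simp only [Fin.val_mk] at hle
    omega
  · have huniv : Finset.univ.filter (fun k : Fin s => k ≤ i0) = Finset.univ := by
      ext k
      simp only [Finset.mem_filter, Finset.mem_univ, true_and, iff_true]
      rw [Fin.le_def]
      have := k.isLt
      omega
    have h2 : ∑ k ∈ Finset.univ.filter (fun k => k ≤ i0), m k = n := by
      rw [huniv]; exact hsum
    have h3 := aux_P1 s m i0
    exact absurd t.isLt (by omega)


/-- Let `r < n`, let `q = ∏ (x - a_i)^{m_i}` be monic of degree `n` with distinct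
roots `a_i`, let `D_q = diag(a_1,…,a_1,…,a_s,…,a_s)` (each `a_i` appearing `m_i`
consecutive times, encoded by the block condition `hd`), and let `U_r` be any matrix
with all entries on the `r`-th subdiagonal nonzero and all other entries `0`.  Then
for every `i` and every `j ≥ 0`, `dim ker((U_r + D_q - a_i I)^j) = min(rj, m_i)`;
i.e. the Jordan type of `U_r + D_q` at `a_i` is `λ^{r,m_i}`, so `U_r + D_q ∈ O^r_q`. -/
theorem stmt5 (n r : ℕ) (hn : 0 < n) (hr : 0 < r) (hrn : r < n)
    (s : ℕ) (a : Fin s → ℂ) (ha : Function.Injective a)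
    (m : Fin s → ℕ) (hm : ∀ i, 1 ≤ m i) (hsum : ∑ i, m i = n)
    (d : Fin n → ℂ)
    (hd : ∀ (t : Fin n) (i : Fin s),
      (∑ j ∈ Finset.univ.filter (fun j => j < i), m j) ≤ (t : ℕ) →
      (t : ℕ) < (∑ j ∈ Finset.univ.filter (fun j => j ≤ i), m j) → d t = a i)
    (U : Matrix (Fin n) (Fin n) ℂ)
    (hU1 : ∀ i j : Fin n, ((i : ℕ) : ℤ) - ((j : ℕ) : ℤ) = (r : ℤ) → U i j ≠ 0)
    (hU0 : ∀ i j : Fin n, ((i : ℕ) : ℤ) - ((j : ℕ) : ℤ) ≠ (r : ℤ) → U i j = 0) :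
    ∀ (i : Fin s) (j : ℕ),
      Module.finrank ℂ (LinearMap.ker (Matrix.mulVecLin
        ((U + Matrix.diagonal d - a i • 1) ^ j))) = min (r * j) (m i) := by
  classical
  intro i j
  rw [Nat.mul_comm r j]
  obtain ⟨L, hLdef⟩ : ∃ L, L = ∑ k ∈ Finset.univ.filter (fun k => k < i), m k := ⟨_, rfl⟩
  set A : Matrix (Fin n) (Fin n) ℂ := U + Matrix.diagonal d - a i • 1 with hAdef
  -- entrywise description of A
  have hAoff : ∀ p q : Fin n, p ≠ q → A p q = U p q := by
    intro p q hpq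
    rw [hAdef]
    simp [Matrix.sub_apply, Matrix.add_apply, Matrix.diagonal_apply_ne _ hpq,
      Matrix.smul_apply, Matrix.one_apply_ne hpq]
  have hAdiag : ∀ p : Fin n, A p p = d p - a i := by
    intro p
    have hU : U p p = 0 := hU0 p p (by omega)
    rw [hAdef]
    simp [Matrix.sub_apply, Matrix.add_apply, Matrix.diagonal_apply_eq,
      Matrix.smul_apply, Matrix.one_apply_eq, hU]
  have hlow : ∀ p q : Fin n, (p:ℕ) < (q:ℕ) → A p q = 0 := by
    intro p q hpq
    rw [hAoff p q (fun h => by rw [h] at hpq; omega)]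
    exact hU0 p q (by omega)
  have hz : ∀ p q : Fin n, p ≠ q → (p:ℕ) ≠ (q:ℕ) + r → A p q = 0 := by
    intro p q hpq hpq2
    rw [hAoff p q hpq]
    refine hU0 p q (fun hcon => ?_)
    have : (p:ℕ) = (q:ℕ) + r := by omega
    exact hpq2 this
  have hsub : ∀ p q : Fin n, (p:ℕ) = (q:ℕ) + r → A p q ≠ 0 := by
    intro p q hpq
    rw [hAoff p q (fun h => by rw [h] at hpq; omega)]
    exact hU1 p q (by omega)
  -- block structure of the diagonal
  have hL1 : ∑ k ∈ Finset.univ.filter (fun k => k ≤ i), m k = L + m i := by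
    rw [hLdef]; exact aux_P1 s m i
  have hL2 : L + m i ≤ n := by
    rw [← hL1, ← hsum]
    exact Finset.sum_le_sum_of_subset (Finset.filter_subset _ _)
  have hmi : 1 ≤ m i := hm i
  have hBd : ∀ p : Fin n, L ≤ (p:ℕ) → (p:ℕ) < L + m i → d p = a i := by
    intro p h1 h2
    exact hd p i (by rw [← hLdef]; exact h1) (by rw [hL1]; exact h2)
  have hblockne : ∀ p : Fin n, ((p:ℕ) < L ∨ L + m i ≤ (p:ℕ)) → d p ≠ a i := by
    intro p hout
    obtain ⟨i0, hc1, hc2⟩ := aux_cover s n hn m hsum p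
    have hdp : d p = a i0 := hd p i0 hc1 (by rw [aux_P1 s m i0]; exact hc2)
    rw [hdp]
    intro hcon
    have hii : i0 = i := ha hcon
    rw [hii, ← hLdef] at hc1 hc2
    omega
  -- facts about powers of A
  have hNtri := aux_pow_tri A hlow j
  have hNdiag : ∀ p : Fin n, (A ^ j) p p = (d p - a i) ^ j := by
    intro p; rw [aux_pow_diag A hlow j p, hAdiag p]
  have hNband := aux_pow_band A hz j
  have hNshift := aux_pow_shift A hr hz hsub j
  have hNblk := aux_pow_block (L := L) (mm := m i) A hlow hz
    (fun p h1 h2 => by rw [hAdiag p, hBd p h1 h2, sub_self]) j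
  have hdiagne : ∀ p : Fin n, ((p:ℕ) < L ∨ L + m i ≤ (p:ℕ)) → (A ^ j) p p ≠ 0 := by
    intro p h
    rw [hNdiag p]
    exact pow_ne_zero _ (sub_ne_zero_of_ne (hblockne p h))
  have hrowsum : ∀ (M : Matrix (Fin n) (Fin n) ℂ) (w : Fin n → ℂ) (p : Fin n),
      Matrix.mulVec M w p = ∑ t, M p t * w t := fun _ _ _ => rfl
  -- generic upper bound via coordinate projections
  have hmain_le : ∀ (c : ℕ) (ι : Fin c → Fin n),
      (∀ v : Fin n → ℂ, Matrix.mulVecLin (A ^ j) v = 0 → (∀ k, v (ι k) = 0) → v = 0) →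
      Module.finrank ℂ (LinearMap.ker (Matrix.mulVecLin (A ^ j))) ≤ c := by
    intro c ι hinj
    have hg : Function.Injective ((LinearMap.funLeft ℂ ℂ ι).comp
        (LinearMap.ker (Matrix.mulVecLin (A ^ j))).subtype) := by
      rw [← LinearMap.ker_eq_bot, LinearMap.ker_eq_bot']
      intro v hv
      apply Subtype.ext
      refine hinj v.1 (LinearMap.mem_ker.1 v.2) ?_
      intro k
      exact congrFun hv k
    have hle := LinearMap.finrank_le_finrank_of_injective hg
    rwa [Module.finrank_fin_fun] at hle
  -- upper bound
  have hub : Module.finrank ℂ (LinearMap.ker (Matrix.mulVecLin (A ^ j))) ≤ min (j * r) (m i) := by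
    rcases le_or_gt (j * r) (m i) with hc | hc
    · have hjrn : j * r ≤ n := le_trans hc (by omega)
      rw [min_eq_left hc]
      apply hmain_le (j * r) (fun k => ⟨n - j * r + (k:ℕ), by have := k.isLt; omega⟩)
      intro v hv hcoord
      have hv' : Matrix.mulVec (A ^ j) v = 0 := by rwa [Matrix.mulVecLin_apply] at hv
      have main : ∀ (K : ℕ) (p : Fin n), n - (p:ℕ) ≤ K → v p = 0 := by
        intro K
        induction K with
        | zero => intro p hp; exact absurd hp (by have := p.isLt; omega)
        | succ K ih =>
          intro p hp
          by_cases hge : n - j * r ≤ (p:ℕ)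
          · have hk : (p:ℕ) - (n - j * r) < j * r := by have := p.isLt; omega
            have hpeq : p = ⟨n - j * r + (((⟨(p:ℕ) - (n - j * r), hk⟩ : Fin (j*r)) : ℕ)),
                by have := p.isLt; omega⟩ := by
              apply Fin.ext
              simp only [Fin.val_mk]
              omega
            rw [hpeq]
            exact hcoord _
          · push_neg at hge
            have hq : (p:ℕ) + j * r < n := by omega
            have hsum0 : ∑ t, (A ^ j) ⟨(p:ℕ) + j * r, hq⟩ t * v t = 0 := by
              rw [← hrowsum]
              exact congrFun hv' _
            have hqv : ((⟨(p:ℕ) + j * r, hq⟩ : Fin n) : ℕ) = (p:ℕ) + j * r := rfl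
            have hone : ∑ t, (A ^ j) ⟨(p:ℕ) + j * r, hq⟩ t * v t
                = (A ^ j) ⟨(p:ℕ) + j * r, hq⟩ p * v p := by
              apply Finset.sum_eq_single p
              · intro t _ htp
                rcases lt_or_gt_of_ne (fun h => htp (Fin.ext h) : (t:ℕ) ≠ (p:ℕ)) with hlt | hgt
                · rw [hNband _ t (by rw [hqv]; omega), zero_mul]
                · rw [ih t (by have := t.isLt; omega), mul_zero]
              · intro hmem; exact absurd (Finset.mem_univ p) hmem
            rw [hone] at hsum0
            have hcoef : (A ^ j) ⟨(p:ℕ) + j * r, hq⟩ p ≠ 0 := hNshift _ p (by rw [hqv])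
            exact (mul_eq_zero.1 hsum0).resolve_left hcoef
      funext p
      exact main n p (by have := p.isLt; omega)
    · rw [min_eq_right (le_of_lt hc)]
      apply hmain_le (m i) (fun k => ⟨L + (k:ℕ), by have := k.isLt; omega⟩)
      intro v hv hcoord
      have hv' : Matrix.mulVec (A ^ j) v = 0 := by rwa [Matrix.mulVecLin_apply] at hv
      have main : ∀ (K : ℕ) (p : Fin n), (p:ℕ) < K → v p = 0 := by
        intro K
        induction K with
        | zero => intro p hp; exact absurd hp (by omega)
        | succ K ih =>
          intro p hp
          by_cases hB : L ≤ (p:ℕ) ∧ (p:ℕ) < L + m i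
          · have hk : (p:ℕ) - L < m i := by omega
            have hpeq : p = ⟨L + (((⟨(p:ℕ) - L, hk⟩ : Fin (m i)) : ℕ)),
                by have := p.isLt; omega⟩ := by
              apply Fin.ext
              simp only [Fin.val_mk]
              omega
            rw [hpeq]
            exact hcoord _
          · have hout : (p:ℕ) < L ∨ L + m i ≤ (p:ℕ) := by
              rcases Nat.lt_or_ge (p:ℕ) L with h' | h'
              · exact Or.inl h'
              · right
                by_contra h''
                exact hB ⟨h', by omega⟩
            have hsum0 : ∑ t, (A ^ j) p t * v t = 0 := by
              rw [← hrowsum]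
              exact congrFun hv' p
            have hone : ∑ t, (A ^ j) p t * v t = (A ^ j) p p * v p := by
              apply Finset.sum_eq_single p
              · intro t _ htp
                rcases lt_or_gt_of_ne (fun h => htp (Fin.ext h) : (t:ℕ) ≠ (p:ℕ)) with hlt | hgt
                · rw [ih t (by omega), mul_zero]
                · rw [hNtri p t hgt, zero_mul]
              · intro hmem; exact absurd (Finset.mem_univ p) hmem
            rw [hone] at hsum0
            exact (mul_eq_zero.1 hsum0).resolve_left (hdiagne p hout)
      funext p
      exact main n p p.isLt
  -- lower bound
  have hlb : min (j * r) (m i) ≤ Module.finrank ℂ (LinearMap.ker (Matrix.mulVecLin (A ^ j))) := by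
    set c := min (j * r) (m i) with hcdef
    have hcm : c ≤ m i := min_le_right _ _
    have hcj : c ≤ j * r := min_le_left _ _
    let P : Submodule ℂ (Fin n → ℂ) :=
      { carrier := {v | ∀ p : Fin n, L ≤ (p:ℕ) → v p = 0}
        add_mem' := fun hx hy p hp => by
          rw [Pi.add_apply, hx p hp, hy p hp, add_zero]
        zero_mem' := fun p hp => rfl
        smul_mem' := fun cc v hv p hp => by
          rw [Pi.smul_apply, hv p hp, smul_zero] }
    have hmemP : ∀ v : Fin n → ℂ, v ∈ P ↔ ∀ p : Fin n, L ≤ (p:ℕ) → v p = 0 :=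
      fun v => Iff.rfl
    have htsum : ∀ (w : Fin n → ℂ) (p : Fin n),
        Matrix.mulVec (A ^ j)ᵀ w p = ∑ t, (A ^ j) t p * w t := by
      intro w p
      rw [hrowsum]
      exact Finset.sum_congr rfl (fun t _ => by rw [Matrix.transpose_apply])
    have hmap : ∀ v ∈ P, Matrix.mulVecLin (A ^ j)ᵀ v ∈ P := by
      intro v hv
      refine (hmemP _).2 ?_
      intro p hp
      rw [Matrix.mulVecLin_apply, htsum]
      apply Finset.sum_eq_zero
      intro t _
      by_cases hLt : L ≤ (t:ℕ)
      · rw [(hmemP v).1 hv t hLt, mul_zero]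
      · rw [hNtri t p (by omega), zero_mul]
    set F := (Matrix.mulVecLin (A ^ j)ᵀ).restrict hmap with hFdef
    have hFinj : Function.Injective F := by
      rw [← LinearMap.ker_eq_bot, LinearMap.ker_eq_bot']
      intro vv hvv
      apply Subtype.ext
      have hveq : Matrix.mulVec (A ^ j)ᵀ (vv : Fin n → ℂ) = 0 := by
        have h1 := congrArg Subtype.val hvv
        rw [hFdef, LinearMap.restrict_apply] at h1
        simpa [Matrix.mulVecLin_apply] using h1
      have hvP := (hmemP _).1 vv.2
      have main : ∀ (K : ℕ) (p : Fin n), n - (p:ℕ) ≤ K → (vv : Fin n → ℂ) p = 0 := by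
        intro K
        induction K with
        | zero => intro p hp; exact absurd hp (by have := p.isLt; omega)
        | succ K ih =>
          intro p hp
          by_cases hLp : L ≤ (p:ℕ)
          · exact hvP p hLp
          · push_neg at hLp
            have hsum0 : ∑ t, (A ^ j) t p * (vv : Fin n → ℂ) t = 0 := by
              rw [← htsum]
              exact congrFun hveq p
            have hone : ∑ t, (A ^ j) t p * (vv : Fin n → ℂ) t
                = (A ^ j) p p * (vv : Fin n → ℂ) p := by
              apply Finset.sum_eq_single p
              · intro t _ htp
                rcases lt_or_gt_of_ne (fun h => htp (Fin.ext h) : (t:ℕ) ≠ (p:ℕ)) with hlt | hgt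
                · rw [hNtri t p hlt, zero_mul]
                · by_cases hLt : L ≤ (t:ℕ)
                  · rw [hvP t hLt, mul_zero]
                  · rw [ih t (by have := t.isLt; omega), mul_zero]
              · intro hmem; exact absurd (Finset.mem_univ p) hmem
            rw [hone] at hsum0
            exact (mul_eq_zero.1 hsum0).resolve_left (hdiagne p (Or.inl hLp))
      funext p
      exact main n p (by have := p.isLt; omega)
    have hFsurj : Function.Surjective F := LinearMap.injective_iff_surjective.1 hFinj
    have hqn : ∀ k : Fin c, L + (k:ℕ) < n := fun k => by have := k.isLt; omega
    set qf : Fin c → Fin n := fun k => ⟨L + (k:ℕ), hqn k⟩ with hqf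
    have hqfval : ∀ k : Fin c, ((qf k : Fin n) : ℕ) = L + (k:ℕ) := fun k => rfl
    have hwP : ∀ k : Fin c, Matrix.mulVecLin (A ^ j)ᵀ (Pi.single (qf k) 1) ∈ P := by
      intro k
      refine (hmemP _).2 ?_
      intro p hp
      rw [Matrix.mulVecLin_apply, htsum]
      rw [Finset.sum_eq_single (qf k)]
      · rw [Pi.single_eq_same, mul_one]
        refine hNblk (qf k) p hp (by rw [hqfval]; omega)
          (by rw [hqfval]; have := k.isLt; omega) (by rw [hqfval]; have := k.isLt; omega)
      · intro t _ htk
        rw [Pi.single_eq_of_ne htk, mul_zero]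
      · intro hmem; exact absurd (Finset.mem_univ (qf k)) hmem
    choose pk hpk using fun k => hFsurj ⟨_, hwP k⟩
    have hpkP : ∀ k, ∀ p : Fin n, L ≤ (p:ℕ) → (pk k : Fin n → ℂ) p = 0 :=
      fun k => (hmemP _).1 (pk k).2
    have hpkval : ∀ k, Matrix.mulVec (A ^ j)ᵀ ((pk k : Fin n → ℂ))
        = Matrix.mulVec (A ^ j)ᵀ (Pi.single (qf k) 1) := by
      intro k
      have h1 := congrArg Subtype.val (hpk k)
      rw [hFdef, LinearMap.restrict_apply] at h1
      simpa [Matrix.mulVecLin_apply] using h1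
    set vf : Fin c → (Fin n → ℂ) := fun k => Pi.single (qf k) 1 - (pk k : Fin n → ℂ) with hvf
    have hvker : ∀ k, vf k ∈ LinearMap.ker (Matrix.mulVecLin (A ^ j)ᵀ) := by
      intro k
      rw [LinearMap.mem_ker, hvf]
      simp only [map_sub, Matrix.mulVecLin_apply]
      rw [hpkval k, sub_self]
    have hqfinj : Function.Injective qf := by
      intro k1 k2 h
      have := congrArg Fin.val h
      rw [hqfval, hqfval] at this
      exact Fin.ext (by omega)
    have hind : LinearIndependent ℂ vf := by
      rw [Fintype.linearIndependent_iff]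
      intro g hg k0
      have h1 := congrFun hg (qf k0)
      rw [Finset.sum_apply] at h1
      have h2 : ∀ k : Fin c, (g k • vf k) (qf k0) = if k = k0 then g k else 0 := by
        intro k
        rw [hvf]
        simp only [Pi.smul_apply, Pi.sub_apply, smul_eq_mul]
        rw [hpkP k (qf k0) (by rw [hqfval]; omega), sub_zero, Pi.single_apply]
        by_cases hkk : k = k0
        · subst hkk; simp
        · rw [if_neg (fun h => hkk (hqfinj h).symm), if_neg hkk, mul_zero]
      rw [Finset.sum_congr rfl (fun k _ => h2 k)] at h1
      rw [Finset.sum_ite_eq' Finset.univ k0 g] at h1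
      simpa using h1
    have hind2 : LinearIndependent ℂ
        (fun k => (⟨vf k, hvker k⟩ : LinearMap.ker (Matrix.mulVecLin (A ^ j)ᵀ))) := by
      apply LinearIndependent.of_comp (LinearMap.ker (Matrix.mulVecLin (A ^ j)ᵀ)).subtype
      exact hind
    have hc1 : c ≤ Module.finrank ℂ (LinearMap.ker (Matrix.mulVecLin (A ^ j)ᵀ)) := by
      have := hind2.fintype_card_le_finrank
      simpa using this
    have e1 := LinearMap.finrank_range_add_finrank_ker (Matrix.mulVecLin (A ^ j))
    have e2 := LinearMap.finrank_range_add_finrank_ker (Matrix.mulVecLin (A ^ j)ᵀ)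
    rw [Module.finrank_fin_fun] at e1 e2
    have e3 : Module.finrank ℂ (LinearMap.range (Matrix.mulVecLin (A ^ j)ᵀ))
        = Module.finrank ℂ (LinearMap.range (Matrix.mulVecLin (A ^ j))) :=
      Matrix.rank_transpose (A ^ j)
    omega
  exact le_antisymm hub hlb
end

section
/- Let n ≥ 2 and let r be an integer with 1 ≤ r ≤ n−1 and gcd(r,n) = 1, and let a_1, …, a_n ∈ ℂ. Then the characteristic polynomial of the matrix diag(a_1, …, a_n)·ω^{−r} ∈ M_n(F) is X^n − (∏_{i=1}^n a_i)·z^{−r}. In particular, if ∏ a_i ≠ 0, this polynomial has n distinct roots in an algebraic closure of F, so diag(a_1, …, a_n)·ω^{−r} is regular semisimple. -/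
noncomputable section

/-- The field `F = ℂ((z))` of formal Laurent series. -/
abbrev F : Type := LaurentSeries ℂ

/-- The element `z ∈ F`. -/
def zF : F := HahnSeries.single 1 1

/-- The element `z⁻¹ ∈ F`. -/
def zInv : F := HahnSeries.single (-1) 1

/-- The matrix `ω ∈ M_n(F)`: `1` in each entry `(i, i+1)`, `z` in entry `(n, 1)`,
and `0` elsewhere (1-indexed); for `n = 1`, `ω = (z)`. -/
def omegaMat (n : ℕ) : Matrix (Fin n) (Fin n) F :=
  Matrix.of fun i j =>
    if (j : ℕ) = (i : ℕ) + 1 then 1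
    else if (i : ℕ) = n - 1 ∧ (j : ℕ) = 0 then zF else 0

/-- The matrix `ω⁻¹ ∈ M_n(F)`: `1` in each entry `(i+1, i)`, `z⁻¹` in entry
`(1, n)`, and `0` elsewhere (1-indexed); for `n = 1`, `ω⁻¹ = (z⁻¹)`. -/
def omegaInv (n : ℕ) : Matrix (Fin n) (Fin n) F :=
  Matrix.of fun i j =>
    if (i : ℕ) = (j : ℕ) + 1 then 1
    else if (i : ℕ) = 0 ∧ (j : ℕ) = n - 1 then zInv else 0

/-- Membership in the `m`-th step `𝔦^m = ω^m 𝔦⁰` of the standard Iwahori filtration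
on `M_n(F)`: `X ∈ 𝔦^m` iff the `(i,j)` entry has `z^k`-coefficient `0` whenever
`n·k < m + i - j`. -/
def iwahoriMem (n : ℕ) (m : ℤ) (X : Matrix (Fin n) (Fin n) F) : Prop :=
  ∀ i j : Fin n, ∀ k : ℤ,
    (n : ℤ) * k < m + ((i : ℕ) : ℤ) - ((j : ℕ) : ℤ) → (X i j).coeff k = 0

/-- Membership in the standard Iwahori subgroup `I ⊂ GL_n(𝔬)`: all entries in
`𝔬 = ℂ[[z]]`, constant term upper triangular (this is `g ∈ 𝔦⁰`) and the constant
term invertible (nonzero diagonal entries at `z = 0`). -/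
def memIwahoriGroup (n : ℕ) (g : Matrix (Fin n) (Fin n) F) : Prop :=
  iwahoriMem n 0 g ∧ ∀ i : Fin n, (g i i).coeff 0 ≠ 0

/-- `Res(X dz/z)`: the matrix of `z⁰`-coefficients of the entries of `X`. -/
def resMat (n : ℕ) (X : Matrix (Fin n) (Fin n) F) : Matrix (Fin n) (Fin n) ℂ :=
  Matrix.of fun i j => (X i j).coeff 0

lemma zInv_ne_zero : zInv ≠ 0 := HahnSeries.single_ne_zero one_ne_zero

lemma omegaInv_pow_apply (n : ℕ) : ∀ r : ℕ, r ≤ n - 1 → ∀ i j : Fin n,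
    (omegaInv n ^ r) i j =
      if (j : ℕ) + r = (i : ℕ) then 1
      else if (j : ℕ) + r = n + (i : ℕ) then zInv else 0 := by
  intro r
  induction r with
  | zero =>
    intro _ i j
    have hj := j.isLt
    simp only [pow_zero, Matrix.one_apply, Nat.add_zero, Fin.ext_iff]
    split_ifs <;> first | rfl | omega
  | succ r ih =>
    intro hr i j
    have hn0 : 0 < n := i.pos
    have hi := i.isLt
    have hj := j.isLt
    rw [pow_succ', Matrix.mul_apply]
    by_cases hi0 : (i : ℕ) = 0
    · have hlt : n - 1 < n := by omega
      set k0 : Fin n := ⟨n - 1, hlt⟩ with hk0def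
      have hk0 : (k0 : ℕ) = n - 1 := rfl
      rw [Finset.sum_eq_single k0]
      · have h1 : omegaInv n i k0 = zInv := by
          simp only [omegaInv, Matrix.of_apply, hk0]
          rw [if_neg (by omega), if_pos ⟨hi0, trivial⟩]
        rw [h1, ih (by omega) k0 j, hk0]
        split_ifs <;> first | rfl | ring1 | (exfalso; omega)
      · intro b _ hb
        have hbv : (b : ℕ) ≠ n - 1 := fun h => hb (Fin.ext (h.trans hk0.symm))
        have h0 : omegaInv n i b = 0 := by
          simp only [omegaInv, Matrix.of_apply]
          rw [if_neg (by omega), if_neg (fun h => hbv h.2)]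
        rw [h0, zero_mul]
      · intro h; exact absurd (Finset.mem_univ _) h
    · have hlt : (i : ℕ) - 1 < n := by omega
      set k1 : Fin n := ⟨(i : ℕ) - 1, hlt⟩ with hk1def
      have hk1 : (k1 : ℕ) = (i : ℕ) - 1 := rfl
      rw [Finset.sum_eq_single k1]
      · have h1 : omegaInv n i k1 = 1 := by
          simp only [omegaInv, Matrix.of_apply, hk1]
          rw [if_pos (by omega)]
        rw [h1, ih (by omega) k1 j, hk1, one_mul]
        split_ifs <;> first | rfl | ring1 | (exfalso; omega)
      · intro b _ hb
        have hbv : (b : ℕ) ≠ (i : ℕ) - 1 := fun h => hb (Fin.ext (h.trans hk1.symm))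
        have h0 : omegaInv n i b = 0 := by
          simp only [omegaInv, Matrix.of_apply]
          rw [if_neg (by omega), if_neg (fun h => hi0 h.1)]
        rw [h0, zero_mul]
      · intro h; exact absurd (Finset.mem_univ _) h

open Polynomial
open scoped Fin.NatCast Fin.CommRing

/-- The characteristic polynomial of `diag(a_1,…,a_n)·ω^{-r}` is
`X^n - (∏ a_i)·z^{-r}`; in particular, if `∏ a_i ≠ 0`, this polynomial is
separable (has `n` distinct roots in an algebraic closure of `F`), so
`diag(a_1,…,a_n)·ω^{-r}` is regular semisimple. -/
theorem stmt6 (n : ℕ) (hn : 2 ≤ n) (r : ℕ) (hr1 : 1 ≤ r) (hrn : r ≤ n - 1)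
    (hcop : Nat.Coprime r n) (a : Fin n → ℂ) :
    Matrix.charpoly (Matrix.diagonal (fun i => algebraMap ℂ F (a i)) * (omegaInv n) ^ r)
      = Polynomial.X ^ n - Polynomial.C (algebraMap ℂ F (∏ i, a i) * zInv ^ r) ∧
    ((∏ i, a i) ≠ 0 →
      (Matrix.charpoly
        (Matrix.diagonal (fun i => algebraMap ℂ F (a i)) * (omegaInv n) ^ r)).Separable) := by
  obtain ⟨m, rfl⟩ : ∃ m, n = m + 1 := ⟨n - 1, by omega⟩
  have hm1 : 1 ≤ m := by omega
  set aF : Fin (m + 1) → F := fun i => algebraMap ℂ F (a i) with haF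
  set M : Matrix (Fin (m + 1)) (Fin (m + 1)) F :=
    Matrix.diagonal aF * omegaInv (m + 1) ^ r with hMdef
  have hM : ∀ i j : Fin (m + 1), M i j =
      if (j : ℕ) + r = (i : ℕ) then aF i
      else if (j : ℕ) + r = (m + 1) + (i : ℕ) then aF i * zInv else 0 := by
    intro i j
    rw [hMdef, Matrix.diagonal_mul, omegaInv_pow_apply (m + 1) r (by omega) i j]
    split_ifs <;> ring
  -- the translation permutation
  set r' : Fin (m + 1) := (r : Fin (m + 1)) with hr'def
  have hr'v : (r' : ℕ) = r := by
    rw [hr'def, Fin.val_natCast, Nat.mod_eq_of_lt (by omega)]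
  set c : Equiv.Perm (Fin (m + 1)) := (finRotate (m + 1)) ^ r with hcdef
  have hc : ∀ i, c i = i + r' := by
    have hrot : ∀ (k : ℕ) (i : Fin (m + 1)),
        ((finRotate (m + 1)) ^ k) i = i + (k : Fin (m + 1)) := by
      intro k
      induction k with
      | zero => intro i; simp
      | succ k ih =>
        intro i
        rw [pow_succ, Equiv.Perm.mul_apply, finRotate_succ_apply, ih, Nat.cast_add,
          Nat.cast_one]
        ring
    intro i
    rw [hcdef, hrot r i, hr'def]
  have hcval : ∀ i : Fin (m + 1), ((c i) : ℕ) = ((i : ℕ) + r) % (m + 1) := by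
    intro i
    rw [hc, Fin.val_add, hr'v]
  have hr'ne : r' ≠ 0 := by
    intro h
    have := congrArg Fin.val h
    rw [hr'v, Fin.val_zero] at this
    omega
  have hfix : ∀ i : Fin (m + 1), i + r' ≠ i := by
    intro i h
    exact hr'ne (by rwa [add_eq_left] at h)
  have hmod : ∀ i j : Fin (m + 1),
      ((i : ℕ) + r = (j : ℕ) ∨ (i : ℕ) + r = (m + 1) + (j : ℕ)) → i + r' = j := by
    intro i j h
    apply Fin.ext
    rw [Fin.val_add, hr'v]
    rcases h with h | h
    · rw [h, Nat.mod_eq_of_lt j.isLt]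
    · rw [h, Nat.add_mod_left, Nat.mod_eq_of_lt j.isLt]
  have hMdiag : ∀ i, M i i = 0 := by
    intro i
    rw [hM]
    split_ifs <;> first | rfl | (exfalso; omega)
  have hAdiag : ∀ i, Matrix.charmatrix M i i = (X : Polynomial F) := by
    intro i
    rw [Matrix.charmatrix_apply_eq, hMdiag, map_zero, sub_zero]
  have hkey : M.charpoly = X ^ (m + 1) - C (algebraMap ℂ F (∏ i, a i) * zInv ^ r) := by
    have hsupp : ∀ σ : Equiv.Perm (Fin (m + 1)), σ ≠ 1 → σ ≠ c →
        ∏ i, Matrix.charmatrix M (σ i) i = 0 := by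
      intro σ hσ1 hσc
      by_contra hne
      have hdich : ∀ i, σ i = i ∨ σ i = i + r' := by
        intro i
        by_contra hcon
        push_neg at hcon
        apply hne
        apply Finset.prod_eq_zero (Finset.mem_univ i)
        rw [Matrix.charmatrix_apply_ne M _ _ hcon.1, hM]
        rw [if_neg (fun h => hcon.2 ((hmod _ _ (Or.inl h)).symm)),
          if_neg (fun h => hcon.2 ((hmod _ _ (Or.inr h)).symm)), map_zero, neg_zero]
      obtain ⟨i₀, hi₀⟩ : ∃ i, σ i ≠ i := by
        by_contra h
        push_neg at h
        exact hσ1 (Equiv.ext fun i => h i)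
      have hS : ∀ i, σ i = i + r' → σ (i + r') = (i + r') + r' := by
        intro i hi
        rcases hdich (i + r') with h | h
        · exact absurd (σ.injective (h.trans hi.symm)) (hfix i)
        · exact h
      have hi₀' : σ i₀ = i₀ + r' := (hdich i₀).resolve_left hi₀
      have hiter : ∀ k : ℕ,
          σ (i₀ + (k : Fin (m + 1)) * r') = i₀ + (k : Fin (m + 1)) * r' + r' := by
        intro k
        induction k with
        | zero => simpa using hi₀'
        | succ k ih =>
          have h2 := hS _ ih
          have h3 : i₀ + ((k + 1 : ℕ) : Fin (m + 1)) * r'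
              = i₀ + (k : Fin (m + 1)) * r' + r' := by
            push_cast
            ring
          rw [h3]
          exact h2
      have hgen : ∀ j : Fin (m + 1), ∃ k : ℕ, i₀ + (k : Fin (m + 1)) * r' = j := by
        obtain ⟨s, -, hs⟩ := Nat.exists_mul_mod_eq_one_of_coprime hcop (by omega)
        intro j
        refine ⟨(j - i₀).val * s, ?_⟩
        have hcast : (((j - i₀).val * s : ℕ) : Fin (m + 1)) * r' = j - i₀ := by
          have h1 : (((j - i₀).val * s : ℕ) : Fin (m + 1)) * r'
              = (((j - i₀).val * s * r : ℕ) : Fin (m + 1)) := by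
            rw [hr'def]
            push_cast
            ring
          rw [h1]
          apply Fin.ext
          rw [Fin.val_natCast]
          rw [mul_assoc, Nat.mul_mod, mul_comm s r, hs, mul_one,
            Nat.mod_mod_of_dvd _ dvd_rfl, Nat.mod_eq_of_lt (Fin.is_lt _)]
        rw [hcast]
        abel
      apply hσc
      apply Equiv.ext
      intro j
      obtain ⟨k, hk⟩ := hgen j
      rw [← hk, hiter k, hc]
    have hc_ne_one : c ≠ 1 := by
      intro h
      have h0 := Equiv.ext_iff.mp h 0
      rw [hc, Equiv.Perm.one_apply, zero_add] at h0
      exact hr'ne h0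
    have hMc : ∀ i : Fin (m + 1),
        M (c i) i = aF (c i) * zInv ^ (if m + 1 ≤ (i : ℕ) + r then 1 else 0) := by
      intro i
      rcases lt_or_ge ((i : ℕ) + r) (m + 1) with h | h
      · have hv : ((c i) : ℕ) = (i : ℕ) + r := by
          rw [hcval, Nat.mod_eq_of_lt h]
        rw [hM, if_pos hv.symm, if_neg (by omega), pow_zero, mul_one]
      · have hv : ((c i) : ℕ) = (i : ℕ) + r - (m + 1) := by
          rw [hcval, Nat.mod_eq_sub_mod h, Nat.mod_eq_of_lt (by omega)]
        have hi := i.isLt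
        rw [hM, if_neg (by omega), if_pos (by omega), if_pos h, pow_one]
    have hAc : ∀ i : Fin (m + 1), Matrix.charmatrix M (c i) i = - C (M (c i) i) := by
      intro i
      have hne : c i ≠ i := by rw [hc]; exact hfix i
      exact Matrix.charmatrix_apply_ne M _ _ hne
    have hprodM : ∏ i, M (c i) i = algebraMap ℂ F (∏ i, a i) * zInv ^ r := by
      rw [Finset.prod_congr rfl (fun i _ => hMc i), Finset.prod_mul_distrib]
      congr 1
      · rw [Equiv.prod_comp c aF, haF, ← map_prod]
      · rw [Finset.prod_pow_eq_pow_sum]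
        congr 1
        rw [Fin.sum_univ_eq_sum_range (fun k => if m + 1 ≤ k + r then 1 else 0)]
        rw [Finset.sum_ite, Finset.sum_const, Finset.sum_const_zero, add_zero,
          smul_eq_mul, mul_one]
        rw [show Finset.filter (fun k => m + 1 ≤ k + r) (Finset.range (m + 1))
            = Finset.Ico (m + 1 - r) (m + 1) from by
          ext x
          simp only [Finset.mem_filter, Finset.mem_range, Finset.mem_Ico]
          omega]
        rw [Nat.card_Ico]
        omega
    have hpar : Even (m * r + m) := by
      rcases Nat.even_or_odd m with hm | hm
      · exact (hm.mul_right r).add hm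
      · have h2n : 2 ∣ (m + 1) := hm.add_one.two_dvd
        have hro : ¬ 2 ∣ r := by
          intro h2r
          have h12 := Nat.dvd_gcd h2r h2n
          rw [Nat.Coprime] at hcop
          rw [hcop] at h12
          omega
        have hrodd : Odd r := Nat.odd_iff.mpr (by omega)
        exact (hm.mul hrodd).add_odd hm
    rw [Matrix.charpoly, Matrix.det_apply]
    have hdet : (∑ σ : Equiv.Perm (Fin (m + 1)),
          Equiv.Perm.sign σ • ∏ i, Matrix.charmatrix M (σ i) i)
        = ∑ σ ∈ ({1, c} : Finset (Equiv.Perm (Fin (m + 1)))),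
          Equiv.Perm.sign σ • ∏ i, Matrix.charmatrix M (σ i) i := by
      refine (Finset.sum_subset (Finset.subset_univ _) ?_).symm
      intro σ _ hσ
      simp only [Finset.mem_insert, Finset.mem_singleton] at hσ
      push_neg at hσ
      rw [hsupp σ hσ.1 hσ.2]
      rw [Units.smul_def, zsmul_eq_mul, mul_zero]
    rw [hdet, Finset.sum_pair (Ne.symm hc_ne_one)]
    have h1 : (Equiv.Perm.sign (1 : Equiv.Perm (Fin (m + 1))))
        • ∏ i, Matrix.charmatrix M ((1 : Equiv.Perm (Fin (m + 1))) i) i = X ^ (m + 1) := by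
      rw [map_one, one_smul]
      rw [Finset.prod_congr rfl (fun i _ => by
        rw [show (1 : Equiv.Perm (Fin (m + 1))) i = i from rfl, hAdiag])]
      rw [Finset.prod_const, Finset.card_univ, Fintype.card_fin]
    have h2 : (Equiv.Perm.sign c) • ∏ i, Matrix.charmatrix M (c i) i
        = - C (algebraMap ℂ F (∏ i, a i) * zInv ^ r) := by
      have hsign : Equiv.Perm.sign c = (-1 : ℤˣ) ^ (m * r) := by
        rw [hcdef, map_pow, sign_finRotate, ← pow_mul, Nat.add_sub_cancel]
      have hprodA : ∏ i, Matrix.charmatrix M (c i) i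
          = (-1 : Polynomial F) ^ (m + 1) * C (algebraMap ℂ F (∏ i, a i) * zInv ^ r) := by
        calc ∏ i, Matrix.charmatrix M (c i) i
            = ∏ i : Fin (m + 1), (-1 : Polynomial F) * C (M (c i) i) :=
              Finset.prod_congr rfl (fun i _ => by rw [hAc i]; ring)
          _ = (∏ _i : Fin (m + 1), (-1 : Polynomial F)) * ∏ i, C (M (c i) i) :=
              Finset.prod_mul_distrib
          _ = (-1 : Polynomial F) ^ (m + 1) * C (algebraMap ℂ F (∏ i, a i) * zInv ^ r) := by
              rw [Finset.prod_const, Finset.card_univ, Fintype.card_fin, ← map_prod, hprodM]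
      rw [hsign, hprodA, Units.smul_def]
      have hval : (((-1 : ℤˣ) ^ (m * r) : ℤˣ) : ℤ) = (-1) ^ (m * r) := by
        push_cast
        ring
      rw [hval, zsmul_eq_mul]
      push_cast
      rw [← mul_assoc, ← pow_add]
      rw [show m * r + (m + 1) = (m * r + m) + 1 from by ring, pow_succ,
        hpar.neg_one_pow, one_mul, neg_one_mul]
    rw [h1, h2, ← sub_eq_add_neg]
  refine ⟨hkey, fun hpne => ?_⟩
  rw [hkey]
  apply Polynomial.separable_X_pow_sub_C
  · rw [show ((m + 1 : ℕ) : F) = algebraMap ℂ F ((m + 1 : ℕ) : ℂ) from (map_natCast _ _).symm]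
    intro h
    rw [_root_.map_eq_zero] at h
    exact Nat.succ_ne_zero m (by exact_mod_cast h)
  · refine mul_ne_zero (fun h => hpne ?_) (pow_ne_zero _ zInv_ne_zero)
    rwa [_root_.map_eq_zero] at h
end
end

section
/- Let n ≥ 2, let r be an integer with 1 ≤ r ≤ n−1 and gcd(r,n) = 1, let a_1, …, a_n ∈ ℂ all be nonzero, and let c ∈ ℂ satisfy c^n = ∏_{i=1}^n a_i. Then there exists an invertible diagonal matrix t ∈ GL_n(ℂ) (viewed inside GL_n(F)) such that t · diag(a_1, …, a_n) · ω^{−r} · t^{−1} = c · ω^{−r}. -/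
noncomputable section

open Fin.CommRing

private lemma finOneVal (n : ℕ) (hn : 2 ≤ n) [NeZero n] : ((1 : Fin n) : ℕ) = 1 := by
  rw [Fin.val_one']
  exact Nat.mod_eq_of_lt (by omega)

private lemma omegaInv_entry_zero (n : ℕ) (hn : 2 ≤ n) [NeZero n] (k j : Fin n) (hk : k ≠ j + 1) :
    omegaInv n k j = 0 := by
  unfold omegaInv
  simp only [Matrix.of_apply]
  rw [if_neg, if_neg]
  · rintro ⟨hk0, hjn⟩
    apply hk
    apply Fin.ext
    rw [Fin.val_add, finOneVal n hn, hjn, hk0, show n - 1 + 1 = n from by omega, Nat.mod_self]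
  · intro hkval
    apply hk
    apply Fin.ext
    have hk1 : (k : ℕ) < n := k.isLt
    rw [Fin.val_add, finOneVal n hn, hkval, Nat.mod_eq_of_lt (by omega : (j : ℕ) + 1 < n)]

private lemma omegaInv_pow_entry_zero (n : ℕ) (hn : 2 ≤ n) [NeZero n] (m : ℕ) (i j : Fin n)
    (hij : i ≠ j + (m : Fin n)) : ((omegaInv n) ^ m) i j = 0 := by
  induction m generalizing i j with
  | zero =>
    rw [Nat.cast_zero, add_zero] at hij
    rw [pow_zero]
    exact Matrix.one_apply_ne hij
  | succ m ih =>
    rw [pow_succ, Matrix.mul_apply]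
    apply Finset.sum_eq_zero
    intro k _
    by_cases hk : k = j + 1
    · have hik : i ≠ k + (m : Fin n) := by
        subst hk
        intro h
        apply hij
        rw [h, Nat.cast_add, Nat.cast_one]
        ring
      rw [ih i k hik, zero_mul]
    · rw [omegaInv_entry_zero n hn k j hk, mul_zero]

/-- multiplication by `r` on residues, as a map `ℕ → Fin n`. -/
private def gp (n r : ℕ) [NeZero n] (m : ℕ) : Fin n := ((m * r : ℕ) : Fin n)

private lemma gp_add_r (n r : ℕ) [NeZero n] (k : ℕ) :
    gp n r k + ((r : ℕ) : Fin n) = gp n r (k + 1) := by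
  unfold gp
  rw [← Nat.cast_add]
  congr 1
  ring

private lemma gp_mod (n r : ℕ) [NeZero n] (m : ℕ) : gp n r (m % n) = gp n r m := by
  unfold gp
  apply Fin.ext
  rw [Fin.val_natCast, Fin.val_natCast]
  exact Nat.ModEq.mul_right r (Nat.mod_modEq m n)

/-- multiplication by `r` on `Fin n`. -/
private def gF (n r : ℕ) [NeZero n] : Fin n → Fin n := fun k => gp n r (k : ℕ)

private lemma gF_bij (n r : ℕ) [NeZero n] (hcop : Nat.Coprime r n) :
    Function.Bijective (gF n r) := by
  apply Finite.injective_iff_bijective.mp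
  intro k₁ k₂ h
  have h0 : (((k₁ : ℕ) * r : ℕ) : Fin n).val = (((k₂ : ℕ) * r : ℕ) : Fin n).val :=
    congrArg Fin.val h
  rw [Fin.val_natCast, Fin.val_natCast] at h0
  have h3 : (k₁ : ℕ) ≡ (k₂ : ℕ) [MOD n] :=
    Nat.ModEq.cancel_right_of_coprime (by simpa [Nat.Coprime, Nat.gcd_comm] using hcop) h0
  apply Fin.ext
  have h4 : (k₁ : ℕ) % n = (k₂ : ℕ) % n := h3
  rwa [Nat.mod_eq_of_lt k₁.isLt, Nat.mod_eq_of_lt k₂.isLt] at h4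

/-- the partial products along the `r`-cycle. -/
private noncomputable def sp (n r : ℕ) [NeZero n] (a : Fin n → ℂ) (c : ℂ) (k : ℕ) : ℂ :=
  c ^ k * (∏ m ∈ Finset.range k, a (gp n r (m + 1)))⁻¹

private lemma sp_ne (n r : ℕ) [NeZero n] (a : Fin n → ℂ) (ha : ∀ i, a i ≠ 0)
    (c : ℂ) (hc0 : c ≠ 0) (k : ℕ) : sp n r a c k ≠ 0 :=
  mul_ne_zero (pow_ne_zero _ hc0)
    (inv_ne_zero (Finset.prod_ne_zero_iff.mpr fun m _ => ha _))

/-- the conjugating diagonal entries. -/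
private noncomputable def tF (n r : ℕ) [NeZero n] (hbij : Function.Bijective (gF n r))
    (a : Fin n → ℂ) (c : ℂ) (i : Fin n) : ℂ :=
  sp n r a c (((Equiv.ofBijective (gF n r) hbij).symm i : Fin n) : ℕ)

private lemma tF_rel (n r : ℕ) (hn : 2 ≤ n) [NeZero n]
    (hbij : Function.Bijective (gF n r)) (a : Fin n → ℂ) (ha : ∀ i, a i ≠ 0)
    (c : ℂ) (hc : c ^ n = ∏ i, a i) (j : Fin n) :
    tF n r hbij a c (j + ((r : ℕ) : Fin n)) * a (j + ((r : ℕ) : Fin n))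
      = c * tF n r hbij a c j := by
  have hprod_ne : (∏ i, a i) ≠ 0 := Finset.prod_ne_zero_iff.mpr fun i _ => ha i
  have hc0 : c ≠ 0 := by
    intro h
    rw [h, zero_pow (by omega : n ≠ 0)] at hc
    exact hprod_ne hc.symm
  set E : Fin n ≃ Fin n := Equiv.ofBijective (gF n r) hbij with hE
  set k : Fin n := E.symm j with hk
  have hj : gF n r k = j := E.apply_symm_apply j
  have hjr : j + ((r : ℕ) : Fin n) = gp n r ((k : ℕ) + 1) := by
    rw [← hj]
    exact gp_add_r n r (k : ℕ)
  have hek1 : E.symm (j + ((r : ℕ) : Fin n)) = (((k : ℕ) + 1 : ℕ) : Fin n) := by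
    rw [Equiv.symm_apply_eq]
    show j + ((r : ℕ) : Fin n) = gp n r (((((k : ℕ) + 1 : ℕ) : Fin n)) : ℕ)
    rw [hjr, Fin.val_natCast]
    exact (gp_mod n r ((k : ℕ) + 1)).symm
  have htjr : tF n r hbij a c (j + ((r : ℕ) : Fin n)) = sp n r a c (((k : ℕ) + 1) % n) := by
    unfold tF
    rw [hek1, Fin.val_natCast]
  have htj : tF n r hbij a c j = sp n r a c (k : ℕ) := by
    unfold tF
    rw [← hk]
  by_cases hlt : (k : ℕ) + 1 < n
  · rw [htjr, htj, Nat.mod_eq_of_lt hlt, hjr]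
    unfold sp
    rw [Finset.prod_range_succ]
    have hA : a (gp n r ((k : ℕ) + 1)) ≠ 0 := ha _
    have hP : (∏ m ∈ Finset.range (k : ℕ), a (gp n r (m + 1))) ≠ 0 :=
      Finset.prod_ne_zero_iff.mpr fun m _ => ha _
    field_simp
    ring
  · have hkn : (k : ℕ) + 1 = n := by have := k.isLt; omega
    have hkval : (k : ℕ) = n - 1 := by omega
    have hjr0 : j + ((r : ℕ) : Fin n) = 0 := by
      rw [hjr, hkn]
      apply Fin.ext
      show ((n * r : ℕ) : Fin n).val = _
      rw [Fin.val_natCast, Nat.mul_mod_right]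
      exact (Fin.val_zero n).symm
    have hProd : ∏ m ∈ Finset.range n, a (gp n r m) = ∏ i, a i := by
      rw [← Fin.prod_univ_eq_prod_range (fun m => a (gp n r m)) n]
      exact hbij.prod_comp a
    have hProd' : a 0 * ∏ m ∈ Finset.range (n - 1), a (gp n r (m + 1)) = ∏ i, a i := by
      have hn' : n = (n - 1) + 1 := by omega
      have hProd2 : ∏ m ∈ Finset.range ((n - 1) + 1), a (gp n r m) = ∏ i, a i := by
        rw [show n - 1 + 1 = n from hn'.symm]
        exact hProd
      rw [Finset.prod_range_succ'] at hProd2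
      have hg0 : gp n r 0 = 0 := by
        unfold gp
        norm_num
      rw [hg0] at hProd2
      rw [mul_comm]
      exact hProd2
    rw [htjr, htj, hkn, Nat.mod_self, hjr0, hkval]
    unfold sp
    simp only [pow_zero, Finset.prod_range_zero, inv_one, one_mul, mul_one]
    have hP : (∏ m ∈ Finset.range (n - 1), a (gp n r (m + 1))) ≠ 0 :=
      Finset.prod_ne_zero_iff.mpr fun m _ => ha _
    have hpow : c * c ^ (n - 1) = c ^ n := by
      rw [← pow_succ']
      congr 1
      omega
    have hcn : c ^ n = a 0 * ∏ m ∈ Finset.range (n - 1), a (gp n r (m + 1)) := by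
      rw [hc, ← hProd']
    rw [← mul_assoc, hpow, hcn, mul_assoc, mul_inv_cancel₀ hP, mul_one]

/-- If `a_1, …, a_n` are nonzero and `c^n = ∏ a_i`, then there is an invertible
diagonal complex matrix `t` with `t · diag(a_1,…,a_n) · ω^{-r} · t⁻¹ = c · ω^{-r}`. -/
theorem stmt7 (n : ℕ) (hn : 2 ≤ n) (r : ℕ) (hr1 : 1 ≤ r) (hrn : r ≤ n - 1)
    (hcop : Nat.Coprime r n) (a : Fin n → ℂ) (ha : ∀ i, a i ≠ 0)
    (c : ℂ) (hc : c ^ n = ∏ i, a i) :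
    ∃ t : Fin n → ℂ, (∀ i, t i ≠ 0) ∧
      Matrix.diagonal (fun i => algebraMap ℂ F (t i)) *
          (Matrix.diagonal (fun i => algebraMap ℂ F (a i)) * (omegaInv n) ^ r) *
          Matrix.diagonal (fun i => algebraMap ℂ F ((t i)⁻¹))
        = algebraMap ℂ F c • (omegaInv n) ^ r := by
  haveI : NeZero n := ⟨by omega⟩
  have hprod_ne : (∏ i, a i) ≠ 0 := Finset.prod_ne_zero_iff.mpr fun i _ => ha i
  have hc0 : c ≠ 0 := by
    intro h
    rw [h, zero_pow (by omega : n ≠ 0)] at hc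
    exact hprod_ne hc.symm
  have hbij : Function.Bijective (gF n r) := gF_bij n r hcop
  set t : Fin n → ℂ := tF n r hbij a c with ht
  have ht_ne : ∀ i, t i ≠ 0 := fun i => sp_ne n r a ha c hc0 _
  have hrel : ∀ j : Fin n, t (j + ((r : ℕ) : Fin n)) * a (j + ((r : ℕ) : Fin n)) * (t j)⁻¹ = c := by
    intro j
    rw [ht, tF_rel n r hn hbij a ha c hc j, mul_inv_cancel_right₀ (ht_ne j)]
  refine ⟨t, ht_ne, ?_⟩
  ext i j
  simp only [Matrix.diagonal_mul, Matrix.mul_diagonal, Matrix.smul_apply, smul_eq_mul]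
  by_cases hij : i = j + ((r : ℕ) : Fin n)
  · subst hij
    have hmap : algebraMap ℂ F (t (j + ((r : ℕ) : Fin n))) *
        algebraMap ℂ F (a (j + ((r : ℕ) : Fin n))) * algebraMap ℂ F ((t j)⁻¹)
        = algebraMap ℂ F c := by
      rw [← map_mul, ← map_mul, hrel j]
    rw [show ∀ (T A Ti X : F), T * (A * X) * Ti = T * A * Ti * X from fun _ _ _ _ => by ring,
      hmap]
  · rw [omegaInv_pow_entry_zero n hn r i j hij]
    ring
end
end

section
/- Let n ≥ 1 and let r be an integer with gcd(r,n) = 1. Consider the ℂ-linear map φ on the space 𝔱 of diagonal matrices with complex entries, defined by φ(γ) = γ − ω^{−r} γ ω^{r} (computed in M_n(F); φ(γ) is again a diagonal complex matrix). Then: (1) the image of φ is exactly the set of trace-zero diagonal complex matrices, i.e., 𝔱 ∩ 𝔰𝔩_n(ℂ); and (2) the kernel of φ is exactly the scalar matrices ℂ·I; equivalently, a diagonal complex matrix γ commutes with ω^r if and only if γ is scalar. -/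
noncomputable section

open scoped Fin.NatCast Fin.IntCast Fin.CommRing

section helpers
variable {m : ℕ}

lemma zInv_mul_zF : zInv * zF = 1 := by
  rw [zInv, zF, HahnSeries.single_mul_single]; norm_num
lemma zF_mul_zInv : zF * zInv = 1 := by
  rw [zF, zInv, HahnSeries.single_mul_single]; norm_num

/-- Generalized cyclic-shift matrix: entry `(i, i+s)` is `g i`, rest `0`. -/
def Mmat (g : Fin (m+1) → F) (s : Fin (m+1)) : Matrix (Fin (m+1)) (Fin (m+1)) F :=
  Matrix.of fun i j => if j = i + s then g i else 0

lemma Mmat_mul (g h : Fin (m+1) → F) (s t : Fin (m+1)) :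
    Mmat g s * Mmat h t = Mmat (fun i => g i * h (i + s)) (s + t) := by
  refine Matrix.ext fun i j => ?_
  simp only [Mmat, Matrix.mul_apply, Matrix.of_apply]
  rw [Finset.sum_eq_single (i + s)]
  · by_cases hj : j = i + (s + t)
    · rw [if_pos rfl, if_pos (by rw [hj, add_assoc]), if_pos hj]
    · rw [if_pos rfl, if_neg (by rw [add_assoc]; exact hj), if_neg hj, mul_zero]
  · intro k _ hk; rw [if_neg hk, zero_mul]
  · intro h; exact absurd (Finset.mem_univ _) h

lemma diagonal_eq_Mmat (d : Fin (m+1) → F) : Matrix.diagonal d = Mmat d 0 := by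
  refine Matrix.ext fun i j => ?_
  simp only [Matrix.diagonal, Mmat, Matrix.of_apply, add_zero]
  by_cases h : i = j
  · subst h; simp
  · rw [if_neg h, if_neg (Ne.symm h)]

lemma Mmat_one : Mmat (1 : Fin (m+1) → F) 0 = 1 := by
  rw [← diagonal_eq_Mmat]; exact Matrix.diagonal_one

lemma Mmat_zero_inj {d d' : Fin (m+1) → F} (h : Mmat d 0 = Mmat d' 0) : d = d' := by
  rw [← diagonal_eq_Mmat, ← diagonal_eq_Mmat] at h
  exact Matrix.diagonal_injective h

lemma omegaMat_eq :
    omegaMat (m+1) = Mmat (fun i => if (i : ℕ) = m then zF else 1) 1 := by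
  refine Matrix.ext fun i j => ?_
  simp only [omegaMat, Mmat, Matrix.of_apply, Nat.add_sub_cancel]
  have hval := Fin.val_add_one i
  have hiff : (j = i + 1) ↔ ((j : ℕ) = if i = Fin.last m then 0 else (i : ℕ) + 1) := by
    rw [Fin.ext_iff, hval]
  have hlast_iff : (i = Fin.last m) ↔ ((i : ℕ) = m) := by
    rw [Fin.ext_iff]; rfl
  by_cases hlast : (i : ℕ) = m
  · rw [if_pos hlast] at *
    rw [if_pos (hlast_iff.mpr hlast)] at hiff
    have hj := j.isLt
    rw [if_neg (by omega)]
    by_cases hj0 : (j : ℕ) = 0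
    · rw [if_pos ⟨hlast, hj0⟩, if_pos (hiff.mpr hj0)]
    · rw [if_neg (fun hc => hj0 hc.2), if_neg (fun hc => hj0 (hiff.mp hc))]
  · rw [if_neg hlast]
    rw [if_neg (fun hc => hlast (hlast_iff.mp hc))] at hiff
    by_cases hjs : (j : ℕ) = (i : ℕ) + 1
    · rw [if_pos hjs, if_pos (hiff.mpr hjs)]
    · rw [if_neg hjs, if_neg (fun hc => hjs (hiff.mp hc)), if_neg (fun hc => hlast hc.1)]

lemma val_sub_one (i : Fin (m+1)) :
    ((i + (-1) : Fin (m+1)) : ℕ) = if (i : ℕ) = 0 then m else (i : ℕ) - 1 := by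
  have hval : ((i + (-1) : Fin (m+1)) : ℕ) = ((i : ℕ) + m) % (m+1) := by
    rw [Fin.val_add, Fin.coe_neg_one]
  have hi := i.isLt
  by_cases hi0 : (i : ℕ) = 0
  · rw [if_pos hi0, hval, hi0, Nat.zero_add, Nat.mod_eq_of_lt (by omega)]
  · rw [if_neg hi0, hval]
    have h2 : (i : ℕ) + m = ((i : ℕ) - 1) + (m + 1) := by omega
    rw [h2, Nat.add_mod_right, Nat.mod_eq_of_lt (by omega)]

lemma omegaInv_eq :
    omegaInv (m+1) = Mmat (fun i => if (i : ℕ) = 0 then zInv else 1) (-1) := by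
  refine Matrix.ext fun i j => ?_
  simp only [omegaInv, Mmat, Matrix.of_apply, Nat.add_sub_cancel]
  have hval := val_sub_one i
  have hiff : (j = i + (-1)) ↔ ((j : ℕ) = if (i : ℕ) = 0 then m else (i : ℕ) - 1) := by
    rw [Fin.ext_iff, hval]
  have hi := i.isLt; have hj := j.isLt
  by_cases hi0 : (i : ℕ) = 0
  · rw [if_pos hi0] at hiff
    rw [if_neg (by omega), if_pos hi0]
    by_cases hjn : (j : ℕ) = m
    · rw [if_pos ⟨hi0, hjn⟩, if_pos (hiff.mpr hjn)]
    · rw [if_neg (fun hc => hjn hc.2), if_neg (fun hc => hjn (hiff.mp hc))]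
  · rw [if_neg hi0] at hiff
    have hiff2 : (j = i + (-1)) ↔ ((i : ℕ) = (j : ℕ) + 1) := by rw [hiff]; omega
    by_cases hji : (i : ℕ) = (j : ℕ) + 1
    · rw [if_pos hji, if_pos (hiff2.mpr hji), if_neg hi0]
    · rw [if_neg hji, if_neg (fun hc => hji (hiff2.mp hc)), if_neg (fun hc => hi0 hc.1)]

lemma omega_mul_inv : omegaMat (m+1) * omegaInv (m+1) = 1 := by
  rw [omegaMat_eq, omegaInv_eq, Mmat_mul]
  have key : (fun i : Fin (m+1) =>
      (if (i : ℕ) = m then zF else 1) * (if ((i + 1 : Fin (m+1)) : ℕ) = 0 then zInv else 1))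
      = fun _ => (1 : F) := by
    funext i
    have hval := Fin.val_add_one i
    have hlast_iff : (i = Fin.last m) ↔ ((i : ℕ) = m) := by rw [Fin.ext_iff]; rfl
    by_cases hlast : (i : ℕ) = m
    · rw [if_pos (hlast_iff.mpr hlast)] at hval
      rw [if_pos hlast, if_pos hval]
      exact zF_mul_zInv
    · rw [if_neg (fun hc => hlast (hlast_iff.mp hc))] at hval
      rw [if_neg hlast, if_neg (by omega), one_mul]
  rw [key, add_neg_cancel]; exact Mmat_one

lemma inv_mul_omega : omegaInv (m+1) * omegaMat (m+1) = 1 := by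
  rw [omegaMat_eq, omegaInv_eq, Mmat_mul]
  have key : (fun i : Fin (m+1) =>
      (if (i : ℕ) = 0 then zInv else 1) * (if ((i + (-1) : Fin (m+1)) : ℕ) = m then zF else 1))
      = fun _ => (1 : F) := by
    funext i
    have hval := val_sub_one i
    have hi := i.isLt
    by_cases hi0 : (i : ℕ) = 0
    · rw [if_pos hi0] at hval
      rw [if_pos hi0, if_pos hval]
      exact zInv_mul_zF
    · rw [if_neg hi0] at hval
      rw [if_neg hi0, if_neg (by omega), one_mul]
  rw [key, neg_add_cancel]; exact Mmat_one

lemma Mmat_pow (g0 : Fin (m+1) → F) (s : Fin (m+1)) (k : ℕ) :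
    ∃ g, (Mmat g0 s) ^ k = Mmat g (k • s) := by
  induction k with
  | zero => exact ⟨1, by rw [pow_zero, zero_smul, Mmat_one]⟩
  | succ k ih =>
    obtain ⟨g, hg⟩ := ih
    exact ⟨fun i => g i * g0 (i + k • s), by rw [pow_succ, hg, Mmat_mul, succ_nsmul]⟩

lemma mul_right_bij (τ a : Fin (m+1)) (ha : τ * a = 1) :
    Function.Bijective (fun x : Fin (m+1) => x * τ) := by
  refine Finite.injective_iff_bijective.mp fun x y hxy => ?_
  have h2 : x * τ * a = y * τ * a := congrArg (· * a) hxy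
  rwa [mul_assoc, mul_assoc, ha, mul_one, mul_one] at h2

lemma sum_shift (τ : Fin (m+1)) (D : Fin (m+1) → ℂ) :
    ∑ i, D (i + τ) = ∑ i, D i :=
  Fintype.sum_equiv (Equiv.addRight τ) _ _ (fun _ => rfl)

lemma exists_D (τ a : Fin (m+1)) (ha : τ * a = 1) (E : Fin (m+1) → ℂ)
    (hE : ∑ i, E i = 0) : ∃ D : Fin (m+1) → ℂ, ∀ i, D i - D (i + τ) = E i := by
  have haτ : a * τ = 1 := by rw [mul_comm]; exact ha
  have hsum : ∑ j ∈ Finset.range (m+1), E ((j : Fin (m+1)) * τ) = 0 := by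
    have h1 : ∑ j ∈ Finset.range (m+1), E ((j : Fin (m+1)) * τ)
        = ∑ x : Fin (m+1), E (x * τ) := by
      rw [← Fin.sum_univ_eq_sum_range (fun j => E ((j : Fin (m+1)) * τ))]
      exact Finset.sum_congr rfl fun x _ => by rw [Fin.cast_val_eq_self]
    rw [h1, Fintype.sum_bijective _ (mul_right_bij τ a ha) _ E (fun _ => rfl)]
    exact hE
  refine ⟨fun i => -(∑ j ∈ Finset.range ((i * a).val), E ((j : Fin (m+1)) * τ)), fun i => ?_⟩
  have hk : (i * a) * τ = i := by rw [mul_assoc, haτ, mul_one]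
  have hka : (i + τ) * a = i * a + 1 := by rw [add_mul, ha]
  have hval : ((i * a + 1 : Fin (m+1)) : ℕ)
      = if i * a = Fin.last m then 0 else ((i * a : Fin (m+1)) : ℕ) + 1 :=
    Fin.val_add_one (i * a)
  show -(∑ j ∈ Finset.range ((i * a).val), E ((j : Fin (m+1)) * τ))
      - -(∑ j ∈ Finset.range (((i + τ) * a).val), E ((j : Fin (m+1)) * τ)) = E i
  rw [hka]
  by_cases hlast : i * a = Fin.last m
  · rw [if_pos hlast] at hval
    rw [hval]
    simp only [Finset.range_zero, Finset.sum_empty, neg_zero, sub_zero]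
    have hkv : ((i * a : Fin (m+1)) : ℕ) = m := by rw [hlast]; rfl
    have h2 : ∑ j ∈ Finset.range (m+1), E ((j : Fin (m+1)) * τ)
        = ∑ j ∈ Finset.range m, E ((j : Fin (m+1)) * τ) + E (((m : ℕ) : Fin (m+1)) * τ) :=
      Finset.sum_range_succ _ m
    have hcast : ((m : ℕ) : Fin (m+1)) = Fin.last m := by
      have := Fin.cast_val_eq_self (Fin.last m)
      simpa using this
    have hmk : (((m : ℕ) : Fin (m+1)) * τ) = i := by
      rw [hcast, ← hlast, hk]
    rw [hsum, hmk] at h2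
    rw [hkv]
    linear_combination h2
  · rw [if_neg hlast] at hval
    rw [hval, Finset.sum_range_succ, Fin.cast_val_eq_self, hk]
    ring

lemma const_of_shift (τ a : Fin (m+1)) (ha : τ * a = 1) (D : Fin (m+1) → ℂ)
    (h : ∀ i, D i = D (i + τ)) : ∀ i, D i = D 0 := by
  have haτ : a * τ = 1 := by rw [mul_comm]; exact ha
  have key : ∀ k : ℕ, D ((k : Fin (m+1)) * τ) = D 0 := by
    intro k
    induction k with
    | zero => simp
    | succ k ih =>
      have : ((k+1 : ℕ) : Fin (m+1)) * τ = (k : Fin (m+1)) * τ + τ := by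
        push_cast; ring
      rw [this, ← h, ih]
  intro i
  have : i = ((i * a).val : Fin (m+1)) * τ := by
    rw [Fin.cast_val_eq_self, mul_assoc, haτ, mul_one]
  rw [this, key]

lemma pow_mul_pow_eq_one' {M : Type*} [Monoid M] {a b : M}
    (hab : a * b = 1) (hba : b * a = 1) (t : ℕ) : b ^ t * a ^ t = 1 := by
  induction t with
  | zero => simp
  | succ t ih =>
    rw [pow_succ, pow_succ', mul_assoc, ← mul_assoc b a, hba, one_mul, ih]

end helpers

/-- Properties of the map `φ(γ) = γ - ω^{-r} γ ω^{r}` on diagonal complex matrices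
(`gcd(r,n) = 1`): `φ(γ)` is again a diagonal complex matrix with trace zero; every
trace-zero diagonal complex matrix is in the image of `φ`; the kernel of `φ` is
exactly the scalar matrices; equivalently, a diagonal complex matrix commutes with
`ω^r` iff it is scalar. -/
theorem stmt9 (n : ℕ) (hn : 1 ≤ n) (r : ℤ) (hcop : Int.gcd r n = 1)
    (Wpos Wneg : Matrix (Fin n) (Fin n) F)
    (hWpos : Wpos = if 0 ≤ r then (omegaMat n) ^ r.toNat else (omegaInv n) ^ (-r).toNat)
    (hWneg : Wneg = if 0 ≤ r then (omegaInv n) ^ r.toNat else (omegaMat n) ^ (-r).toNat) :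
    (∀ D : Fin n → ℂ, ∃ E : Fin n → ℂ,
        Matrix.diagonal (fun i => algebraMap ℂ F (D i))
            - Wneg * Matrix.diagonal (fun i => algebraMap ℂ F (D i)) * Wpos
          = Matrix.diagonal (fun i => algebraMap ℂ F (E i)) ∧ ∑ i, E i = 0) ∧
    (∀ E : Fin n → ℂ, ∑ i, E i = 0 → ∃ D : Fin n → ℂ,
        Matrix.diagonal (fun i => algebraMap ℂ F (D i))
            - Wneg * Matrix.diagonal (fun i => algebraMap ℂ F (D i)) * Wpos
          = Matrix.diagonal (fun i => algebraMap ℂ F (E i))) ∧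
    (∀ D : Fin n → ℂ,
        (Matrix.diagonal (fun i => algebraMap ℂ F (D i))
            - Wneg * Matrix.diagonal (fun i => algebraMap ℂ F (D i)) * Wpos = 0)
          ↔ ∃ c : ℂ, ∀ i, D i = c) ∧
    (∀ D : Fin n → ℂ,
        (Matrix.diagonal (fun i => algebraMap ℂ F (D i)) * Wpos
            = Wpos * Matrix.diagonal (fun i => algebraMap ℂ F (D i)))
          ↔ ∃ c : ℂ, ∀ i, D i = c) := by
  obtain ⟨m, rfl⟩ : ∃ m, n = m + 1 := ⟨n - 1, by omega⟩
  clear hn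
  set σ : Fin (m+1) := ((r : ℤ) : Fin (m+1)) with hσ
  obtain ⟨uσ, huσ⟩ : ∃ u : Fin (m+1), σ * u = 1 := by
    have hco : IsCoprime (r : ℤ) ((m+1 : ℕ) : ℤ) := Int.isCoprime_iff_gcd_eq_one.mpr hcop
    obtain ⟨a, b, hab⟩ := hco
    refine ⟨(a : Fin (m+1)), ?_⟩
    have hthis := congrArg (fun t : ℤ => (t : Fin (m+1))) hab
    push_cast at hthis
    have h0 : ((m : ℕ) : Fin (m+1)) + 1 = 0 := by
      have h := Fin.natCast_self (m+1); push_cast at h; exact h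
    rw [h0, mul_zero, add_zero] at hthis
    rw [hσ, mul_comm]; exact hthis
  obtain ⟨g, hg⟩ : ∃ g, Wpos = Mmat g σ := by
    by_cases hr : 0 ≤ r
    · rw [hWpos, if_pos hr, omegaMat_eq]
      obtain ⟨g, hgp⟩ := Mmat_pow _ 1 r.toNat
      have hsh : r.toNat • (1 : Fin (m+1)) = σ := by
        rw [nsmul_eq_mul, mul_one, ← Int.cast_natCast, Int.toNat_of_nonneg hr, hσ]
      exact ⟨g, by rw [hgp, hsh]⟩
    · rw [hWpos, if_neg hr, omegaInv_eq]
      obtain ⟨g, hgp⟩ := Mmat_pow _ (-1) (-r).toNat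
      have hsh : (-r).toNat • (-1 : Fin (m+1)) = σ := by
        rw [nsmul_eq_mul, mul_neg_one, ← Int.cast_natCast,
          Int.toNat_of_nonneg (by omega : (0:ℤ) ≤ -r), Int.cast_neg, neg_neg, hσ]
      exact ⟨g, by rw [hgp, hsh]⟩
  obtain ⟨h, hh⟩ : ∃ h, Wneg = Mmat h (-σ) := by
    by_cases hr : 0 ≤ r
    · rw [hWneg, if_pos hr, omegaInv_eq]
      obtain ⟨h, hhp⟩ := Mmat_pow _ (-1) r.toNat
      have hsh : r.toNat • (-1 : Fin (m+1)) = -σ := by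
        rw [nsmul_eq_mul, mul_neg_one, ← Int.cast_natCast, Int.toNat_of_nonneg hr, hσ]
      exact ⟨h, by rw [hhp, hsh]⟩
    · rw [hWneg, if_neg hr, omegaMat_eq]
      obtain ⟨h, hhp⟩ := Mmat_pow _ 1 (-r).toNat
      have hsh : (-r).toNat • (1 : Fin (m+1)) = -σ := by
        rw [nsmul_eq_mul, mul_one, ← Int.cast_natCast,
          Int.toNat_of_nonneg (by omega : (0:ℤ) ≤ -r), Int.cast_neg, hσ]
      exact ⟨h, by rw [hhp, hsh]⟩
  have hWW : Wneg * Wpos = 1 := by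
    by_cases hr : 0 ≤ r
    · rw [hWpos, hWneg, if_pos hr, if_pos hr]
      exact pow_mul_pow_eq_one' omega_mul_inv inv_mul_omega r.toNat
    · rw [hWpos, hWneg, if_neg hr, if_neg hr]
      exact pow_mul_pow_eq_one' inv_mul_omega omega_mul_inv (-r).toNat
  have hWW' : Wpos * Wneg = 1 := by
    by_cases hr : 0 ≤ r
    · rw [hWpos, hWneg, if_pos hr, if_pos hr]
      exact pow_mul_pow_eq_one' inv_mul_omega omega_mul_inv r.toNat
    · rw [hWpos, hWneg, if_neg hr, if_neg hr]
      exact pow_mul_pow_eq_one' omega_mul_inv inv_mul_omega (-r).toNat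
  have hentry : ∀ i, h i * g (i + -σ) = 1 := by
    have h1 : Mmat (fun i => h i * g (i + -σ)) (-σ + σ) = 1 := by
      rw [← Mmat_mul, ← hg, ← hh, hWW]
    rw [neg_add_cancel] at h1
    have h2 := Mmat_zero_inj (h1.trans Mmat_one.symm)
    intro i; exact congrFun h2 i
  have conj : ∀ d : Fin (m+1) → F,
      Wneg * Matrix.diagonal d * Wpos = Matrix.diagonal (fun i => d (i + -σ)) := by
    intro d
    rw [hg, hh, diagonal_eq_Mmat d, Mmat_mul, Mmat_mul, diagonal_eq_Mmat]
    simp only [add_zero, neg_add_cancel]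
    have hfun : (fun i => h i * d (i + -σ) * g (i + -σ)) = fun i => d (i + -σ) := by
      funext i
      rw [mul_comm (h i) (d (i + -σ)), mul_assoc, hentry i, mul_one]
    rw [hfun]
  set τ : Fin (m+1) := -σ with hτ
  have hτu : τ * (-uσ) = 1 := by rw [hτ, neg_mul_neg]; exact huσ
  have hdiff : ∀ D : Fin (m+1) → ℂ,
      Matrix.diagonal (fun i => algebraMap ℂ F (D i))
        - Wneg * Matrix.diagonal (fun i => algebraMap ℂ F (D i)) * Wpos
      = Matrix.diagonal (fun i => algebraMap ℂ F (D i - D (i + τ))) := by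
    intro D
    rw [conj, Matrix.diagonal_sub]
    have hfun : (fun i => algebraMap ℂ F (D i) - algebraMap ℂ F (D (i + τ)))
        = fun i => algebraMap ℂ F (D i - D (i + τ)) := by
      funext i; rw [map_sub]
    rw [hfun]
  have hinj : Function.Injective (algebraMap ℂ F) := (algebraMap ℂ F).injective
  refine ⟨?_, ?_, ?_, ?_⟩
  · intro D
    refine ⟨fun i => D i - D (i + τ), hdiff D, ?_⟩
    rw [Finset.sum_sub_distrib, sum_shift τ D, sub_self]
  · intro E hE
    obtain ⟨D, hD⟩ := exists_D τ (-uσ) hτu E hE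
    refine ⟨D, ?_⟩
    rw [hdiff D]
    have hfun : (fun i => algebraMap ℂ F (D i - D (i + τ)))
        = fun i => algebraMap ℂ F (E i) := by
      funext i; rw [hD i]
    rw [hfun]
  · intro D
    constructor
    · intro h0
      rw [hdiff D] at h0
      have h1 : (fun i => algebraMap ℂ F (D i - D (i + τ))) = fun _ : Fin (m+1) => (0 : F) := by
        apply Matrix.diagonal_injective
        rw [h0]; exact Matrix.diagonal_zero.symm
      have h2 : ∀ i, D i = D (i + τ) := by
        intro i
        have h3 : D i - D (i + τ) = 0 := hinj (by rw [congrFun h1 i, map_zero])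
        linear_combination h3
      exact ⟨D 0, const_of_shift τ (-uσ) hτu D h2⟩
    · rintro ⟨c, hc⟩
      rw [hdiff D]
      have h1 : (fun i => algebraMap ℂ F (D i - D (i + τ))) = fun _ : Fin (m+1) => (0:F) := by
        funext i; rw [hc i, hc (i + τ), sub_self, map_zero]
      rw [h1]; exact Matrix.diagonal_zero
  · intro D
    have equiv1 : Matrix.diagonal (fun i => algebraMap ℂ F (D i)) * Wpos
        = Wpos * Matrix.diagonal (fun i => algebraMap ℂ F (D i))
        ↔ Wneg * Matrix.diagonal (fun i => algebraMap ℂ F (D i)) * Wpos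
          = Matrix.diagonal (fun i => algebraMap ℂ F (D i)) := by
      constructor
      · intro hcomm
        rw [mul_assoc, hcomm, ← mul_assoc, hWW, one_mul]
      · intro hcj
        calc Matrix.diagonal (fun i => algebraMap ℂ F (D i)) * Wpos
            = (Wpos * Wneg) * Matrix.diagonal (fun i => algebraMap ℂ F (D i)) * Wpos := by
              rw [hWW', one_mul]
          _ = Wpos * (Wneg * Matrix.diagonal (fun i => algebraMap ℂ F (D i)) * Wpos) := by
              rw [mul_assoc, mul_assoc, mul_assoc]
          _ = Wpos * Matrix.diagonal (fun i => algebraMap ℂ F (D i)) := by rw [hcj]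
    rw [equiv1, conj]
    constructor
    · intro heq
      have h1 := Matrix.diagonal_injective heq
      have h2 : ∀ i, D i = D (i + τ) := fun i => (hinj (congrFun h1 i)).symm
      exact ⟨D 0, const_of_shift τ (-uσ) hτu D h2⟩
    · rintro ⟨c, hc⟩
      have hfun : (fun i => algebraMap ℂ F (D (i + τ)))
          = fun i => algebraMap ℂ F (D i) := by
        funext i; rw [hc i, hc (i + τ)]
      rw [hfun]
end
end

section
/- Let n and r be coprime positive integers and write n = kr + r′ with k ≥ 0 and 0 ≤ r′ < r. Then n² − k r² − r′² = (n + 1 − r)(n − 1) if and only if r divides n − 1 or r divides n + 1. (Here n² − k r² − r′² is the dimension of the nilpotent adjoint orbit in 𝔤𝔩_n(ℂ) with Jordan type λ^{r,n}, whose conjugate partition has k parts equal to r and, if r′ > 0, one part equal to r′; this identity is the numerical criterion for rigidity of homogeneous Coxeter connections of slope r/n in type A.) -/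
/-- Numerical criterion for rigidity of homogeneous Coxeter connections in type A:
for coprime positive integers `r, n` with `n = k*r + r'`, `0 ≤ r' < r`, the
dimension `n² - k r² - r'²` of the nilpotent orbit with Jordan type `λ^{r,n}`
equals `(n + 1 - r)(n - 1)` if and only if `r` divides `n - 1` or `n + 1`. -/
theorem stmt16 (r n k r' : ℕ) (hr : 0 < r) (hn : 0 < n) (hcop : Nat.Coprime r n)
    (hdecomp : n = k * r + r') (hr' : r' < r) :
    ((n : ℤ) ^ 2 - (k : ℤ) * (r : ℤ) ^ 2 - (r' : ℤ) ^ 2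
        = ((n : ℤ) + 1 - (r : ℤ)) * ((n : ℤ) - 1))
      ↔ ((r : ℤ) ∣ (n : ℤ) - 1 ∨ (r : ℤ) ∣ (n : ℤ) + 1) := by
  have hnz : (n : ℤ) = (k : ℤ) * (r : ℤ) + (r' : ℤ) := by exact_mod_cast hdecomp
  have hrz : (1 : ℤ) ≤ (r : ℤ) := by exact_mod_cast hr
  have hr'z : (r' : ℤ) < (r : ℤ) := by exact_mod_cast hr'
  have hr'0 : (0 : ℤ) ≤ (r' : ℤ) := Int.natCast_nonneg r'
  constructor
  · intro h
    have key : ((r' : ℤ) - 1) * ((r' : ℤ) - (r : ℤ) + 1) = 0 := by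
      linear_combination -h + (r : ℤ) * hnz
    rcases mul_eq_zero.mp key with h1 | h2
    · exact Or.inl ⟨k, by linear_combination hnz + h1⟩
    · exact Or.inr ⟨k + 1, by linear_combination hnz + h2⟩
  · intro h
    have key : ((r' : ℤ) - 1) * ((r' : ℤ) - (r : ℤ) + 1) = 0 := by
      rcases h with ⟨m, hm⟩ | ⟨m, hm⟩
      · have hd : (r' : ℤ) - 1 = (r : ℤ) * (m - k) := by linear_combination hm - hnz
        rcases lt_trichotomy (m - k) 0 with ht | ht | ht
        · have h1 : m - k ≤ -1 := by omega
          have h2 : (r' : ℤ) - 1 ≤ -(r : ℤ) := by nlinarith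
          have h3 : (r : ℤ) = 1 := by linarith
          have h4 : (r' : ℤ) = 0 := by linarith
          rw [h3, h4]; ring
        · rw [ht, mul_zero] at hd
          rw [hd, zero_mul]
        · have : 1 ≤ m - k := by omega
          nlinarith
      · have hd : (r' : ℤ) - (r : ℤ) + 1 = (r : ℤ) * (m - k - 1) := by
          linear_combination hm - hnz
        rcases lt_trichotomy (m - k - 1) 0 with ht | ht | ht
        · have : m - k - 1 ≤ -1 := by omega
          nlinarith
        · rw [ht, mul_zero] at hd
          rw [hd, mul_zero]
        · have : 1 ≤ m - k - 1 := by omega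
          nlinarith
    linear_combination (r : ℤ) * hnz - key
end
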